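/- arXiv:2105.08353 — 4 statements merged into one kernel-verified Lean document; each statement's English description precedes it below -/
import Mathlib

section
/- Let Σ be a nonempty finite type, D a complete linear order, and p, q : (ℕ → Σ) → D quantitative properties. If p and q are both universally monitorable from below, then the property fun f => p f ⊔ q f is universally monitorable from below; dually, if p and q are both universally monitorable from above, then fun f => p f ⊓ q f is universally monitorable from above. -/
open Filter

/-- The length-`n` prefix of an infinite trace `f`. -/
def pref {A : Type*} (f : ℕ → A) (n : ℕ) : List A := List.ofFn (fun i : Fin n => f i.1)

theorem sup_inf_universally_monitorable {A : Type*} [Fintype A] [Nonempty A]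
    {D : Type*} [CompleteLinearOrder D] (p q : (ℕ → A) → D) :
    ((∃ vp : List A → D, ∀ f : ℕ → A,
        Filter.limsup (fun n => vp (pref f n)) Filter.atTop = p f) →
     (∃ vq : List A → D, ∀ f : ℕ → A,
        Filter.limsup (fun n => vq (pref f n)) Filter.atTop = q f) →
     (∃ v : List A → D, ∀ f : ℕ → A,
        Filter.limsup (fun n => v (pref f n)) Filter.atTop = p f ⊔ q f)) ∧
    ((∃ vp : List A → D, ∀ f : ℕ → A,
        Filter.liminf (fun n => vp (pref f n)) Filter.atTop = p f) →
     (∃ vq : List A → D, ∀ f : ℕ → A,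
        Filter.liminf (fun n => vq (pref f n)) Filter.atTop = q f) →
     (∃ v : List A → D, ∀ f : ℕ → A,
        Filter.liminf (fun n => v (pref f n)) Filter.atTop = p f ⊓ q f)) := by
  constructor
  · rintro ⟨vp, hp⟩ ⟨vq, hq⟩
    refine ⟨fun s => vp s ⊔ vq s, fun f => ?_⟩
    rw [← hp f, ← hq f]
    exact limsup_max
  · rintro ⟨vp, hp⟩ ⟨vq, hq⟩
    refine ⟨fun s => vp s ⊓ vq s, fun f => ?_⟩
    rw [← hp f, ← hq f]
    exact liminf_min
end

section
/- Let Σ be a nonempty finite type, D a complete lattice, and p : (ℕ → Σ) → D a quantitative property. Then p is co-continuous, i.e., for every infinite trace f one has p f = ⨆ n, ⨅ g : ℕ → Σ, p ((f↾n)·g), if and only if there exists a prefix-monotone verdict function v : List Σ → D (for all finite traces s, t, if s is a prefix of t then v s ≤ v t) such that for every infinite trace f, ⨆ n, v (f↾n) = p f. -/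
/-- The infinite trace obtained by prepending the finite trace `s` to the infinite trace `f`. -/
def ext {A : Type*} (s : List A) (f : ℕ → A) : ℕ → A :=
  fun n => if h : n < s.length then s.get ⟨n, h⟩ else f (n - s.length)

/-!
The greatest value guaranteed after reading `s`, namely `⨅ g, p (s·g)`, grows along prefixes,
so co-continuity says exactly that this verdict monitors `p`. Conversely, if
`⨆ n, v (f↾n) = p f` for all `f`, then `v s ≤ p (s·g)` for every `g`, since `v s` is a term
of that supremum along `s·g`. So `v` lies below the guaranteed value, and the supremum of the
guaranteed values along `f` is squeezed between `⨆ n, v (f↾n) = p f` and `p f`, the latter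
because `f = (f↾n)·(tail of f)`.
-/

section Traces

variable {A : Type*}

@[simp]
lemma length_pref (f : ℕ → A) (n : ℕ) : (pref f n).length = n :=
  List.length_ofFn

lemma ext_append (s u : List A) (g : ℕ → A) : ext (s ++ u) g = ext s (ext u g) := by
  funext n
  simp only [ext, List.length_append]
  by_cases h1 : n < s.length
  · rw [dif_pos (by omega), dif_pos h1]
    simp [List.getElem_append_left h1]
  · rw [dif_neg h1]
    by_cases h2 : n < s.length + u.length
    · rw [dif_pos h2, dif_pos (by omega)]
      simp only [List.get_eq_getElem]
      rw [List.getElem_append_right (by omega)]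
    · rw [dif_neg h2, dif_neg (by omega)]
      congr 1
      omega

lemma ext_pref_shift (f : ℕ → A) (n : ℕ) : ext (pref f n) (fun k => f (n + k)) = f := by
  funext m
  simp only [ext, length_pref]
  by_cases h : m < n
  · rw [dif_pos h]
    simp [pref]
  · rw [dif_neg h]
    congr 1
    omega

lemma pref_ext (s : List A) (g : ℕ → A) : pref (ext s g) s.length = s := by
  apply List.ext_get (by simp)
  intro i _ h
  simp only [pref, List.get_ofFn, ext, Fin.val_cast]
  rw [dif_pos h]

end Traces

section Verdicts

variable {A D : Type*} [CompleteLattice D]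

def guaranteedValue (p : (ℕ → A) → D) (s : List A) : D :=
  ⨅ g : ℕ → A, p (ext s g)

lemma guaranteedValue_mono (p : (ℕ → A) → D) {s t : List A} (hst : s <+: t) :
    guaranteedValue p s ≤ guaranteedValue p t := by
  obtain ⟨u, rfl⟩ := hst
  refine le_iInf fun g => ?_
  rw [ext_append]
  exact iInf_le _ _

lemma guaranteedValue_pref_le (p : (ℕ → A) → D) (f : ℕ → A) (n : ℕ) :
    guaranteedValue p (pref f n) ≤ p f := by
  conv_rhs => rw [← ext_pref_shift f n]
  exact iInf_le _ _

lemma le_guaranteedValue_of_iSup_eq {p : (ℕ → A) → D} {v : List A → D}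
    (hlim : ∀ f : ℕ → A, (⨆ n : ℕ, v (pref f n)) = p f)
    (s : List A) : v s ≤ guaranteedValue p s := by
  refine le_iInf fun g => ?_
  calc v s = v (pref (ext s g) s.length) := by rw [pref_ext]
    _ ≤ ⨆ n : ℕ, v (pref (ext s g) n) := le_iSup (fun n => v (pref (ext s g) n)) _
    _ = p (ext s g) := hlim _

end Verdicts

theorem cocontinuous_iff_monotone_verdict_general {A : Type*}
    {D : Type*} [CompleteLattice D] (p : (ℕ → A) → D) :
    (∀ f : ℕ → A, p f = ⨆ n : ℕ, ⨅ g : ℕ → A, p (ext (pref f n) g)) ↔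
    (∃ v : List A → D,
      (∀ s t : List A, s <+: t → v s ≤ v t) ∧
      ∀ f : ℕ → A, (⨆ n : ℕ, v (pref f n)) = p f) := by
  constructor
  · intro hp
    exact ⟨guaranteedValue p, fun _ _ => guaranteedValue_mono p, fun f => (hp f).symm⟩
  · rintro ⟨v, -, hlim⟩ f
    apply le_antisymm
    · rw [← hlim f]
      exact iSup_mono fun n => le_guaranteedValue_of_iSup_eq hlim (pref f n)
    · exact iSup_le fun n => guaranteedValue_pref_le p f n

theorem cocontinuous_iff_monotone_verdict {A : Type*} [Fintype A] [Nonempty A]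
    {D : Type*} [CompleteLattice D] (p : (ℕ → A) → D) :
    (∀ f : ℕ → A, p f = ⨆ n : ℕ, ⨅ g : ℕ → A, p (ext (pref f n) g)) ↔
    (∃ v : List A → D,
      (∀ s t : List A, s <+: t → v s ≤ v t) ∧
      ∀ f : ℕ → A, (⨆ n : ℕ, v (pref f n)) = p f) :=
  cocontinuous_iff_monotone_verdict_general p
end

section
/- Let Σ be a nonempty finite type and P : Set (ℕ → Σ) a boolean property. The following are equivalent: (1) there exists v : List Σ → Bool such that for every infinite trace f there exists N with v (f↾n) = decide (f ∈ P) for all n ≥ N; (2) there exists u : List Σ → Option Bool such that for every infinite trace f, writing b := decide (f ∈ P), both (∃ N, ∀ n ≥ N, u (f↾n) ≠ some (!b)) and (∀ N, ∃ n ≥ N, u (f↾n) = some b) hold. -/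
attribute [local instance] Classical.propDecidable

lemma pref_take {A : Type*} (f : ℕ → A) {k n : ℕ} (h : k ≤ n) :
    (pref f n).take k = pref f k := by
  apply List.ext_getElem
  · simp [pref, h]
  · intro i h1 h2
    simp [pref]

lemma pref_length {A : Type*} (f : ℕ → A) (n : ℕ) : (pref f n).length = n := by
  simp [pref]

theorem flat_bool_iff_bot_bool_universal {A : Type*} [Fintype A] [Nonempty A]
    (P : Set (ℕ → A)) :
    (∃ v : List A → Bool, ∀ f : ℕ → A,
      ∃ N : ℕ, ∀ n ≥ N, v (pref f n) = decide (f ∈ P)) ↔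
    (∃ u : List A → Option Bool, ∀ f : ℕ → A,
      (∃ N : ℕ, ∀ n ≥ N, u (pref f n) ≠ some (!(decide (f ∈ P)))) ∧
      (∀ N : ℕ, ∃ n ≥ N, u (pref f n) = some (decide (f ∈ P)))) := by
  constructor
  · rintro ⟨v, hv⟩
    refine ⟨fun s => some (v s), fun f => ?_⟩
    obtain ⟨N, hN⟩ := hv f
    refine ⟨⟨N, fun n hn => ?_⟩, fun M => ⟨max M N, le_max_left _ _, ?_⟩⟩
    · simp only []
      rw [hN n hn]; simp
    · simp only []
      rw [hN _ (le_max_right _ _)]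
  · rintro ⟨u, hu⟩
    refine ⟨fun s =>
      (u (s.take (Nat.findGreatest (fun k => (u (s.take k)).isSome) s.length))).getD false,
      fun f => ?_⟩
    obtain ⟨⟨N, hN⟩, hinf⟩ := hu f
    obtain ⟨n0, hn0, hb⟩ := hinf N
    refine ⟨n0, fun n hn => ?_⟩
    set s := pref f n with hs
    set p := fun k => (u (s.take k)).isSome = true with hp
    have htake : s.take n0 = pref f n0 := pref_take f hn
    have hpn0 : p n0 := by simp [hp, htake, hb]
    have hlen : s.length = n := pref_length f n
    have hle : n0 ≤ Nat.findGreatest p s.length :=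
      Nat.le_findGreatest (by omega) hpn0
    have hspec : p (Nat.findGreatest p s.length) :=
      Nat.findGreatest_spec (m := n0) (by omega) hpn0
    set m := Nat.findGreatest p s.length with hm
    have hmn : m ≤ n := hlen ▸ Nat.findGreatest_le (P := p) s.length
    have htm : s.take m = pref f m := pref_take f hmn
    obtain ⟨c, hc⟩ : ∃ c, u (pref f m) = some c := by
      rw [← htm]; exact Option.isSome_iff_exists.mp hspec
    have hne : u (pref f m) ≠ some (!(decide (f ∈ P))) := hN m (by omega)
    have hcb : c = decide (f ∈ P) := by
      rcases c with _|_ <;> rcases h : decide (f ∈ P) <;> simp_all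
    simp only [hm, hp] at *
    rw [htm, hc, hcb]
    rfl
end

section
/- Let Σ be a nonempty finite type. For every boolean property P : Set (ℕ → Σ) there exists u : List Σ → Bool that is prefix-antitone (for all finite traces s, t with s a prefix of t, u t = true implies u s = true) such that: (∀ infinite trace f, f ∈ P → ∀ n, u (f↾n) = true) and (∀ finite trace s, ∃ infinite trace f, (s·f ∈ P ↔ ∀ n, u ((s·f)↾n) = true)). -/
lemma ext_eq_of_agree {A : Type*} (s : List A) (F : ℕ → A)
    (h : ∀ i (hi : i < s.length), F i = s.get ⟨i, hi⟩) :
    ext s (fun k => F (k + s.length)) = F := by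
  funext n
  simp only [ext]
  split
  · exact (h n ‹_›).symm
  · next hn => congr 1; omega

lemma pref_ext_len {A : Type*} (s : List A) (f : ℕ → A) :
    pref (ext s f) s.length = s := by
  apply List.ext_get
  · simp [pref]
  · intro n h1 h2
    simp [pref, ext]

theorem every_property_exis_monitorable_bf {A : Type*} [Fintype A] [Nonempty A]
    (P : Set (ℕ → A)) :
    ∃ u : List A → Bool,
      (∀ s t : List A, s <+: t → u t = true → u s = true) ∧
      (∀ f : ℕ → A, f ∈ P → ∀ n : ℕ, u (pref f n) = true) ∧
      (∀ s : List A, ∃ f : ℕ → A,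
        (ext s f ∈ P ↔ ∀ n : ℕ, u (pref (ext s f) n) = true)) := by
  classical
  refine ⟨fun s => decide (∃ f, ext s f ∈ P), ?_, ?_, ?_⟩
  · intro s t hst h
    rw [decide_eq_true_iff] at h ⊢
    obtain ⟨g, hg⟩ := h
    refine ⟨fun k => ext t g (k + s.length), ?_⟩
    rw [ext_eq_of_agree]
    · exact hg
    · intro i hi
      obtain ⟨r, rfl⟩ := hst
      simp only [ext]
      rw [dif_pos (by simp; omega)]
      simp [List.getElem_append, hi]
  · intro f hf n
    rw [decide_eq_true_iff]
    refine ⟨fun k => f (k + n), ?_⟩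
    have : ∀ i (hi : i < (pref f n).length), f i = (pref f n).get ⟨i, hi⟩ := by
      intro i hi; simp [pref]
    have h2 := ext_eq_of_agree (pref f n) f this
    simp only [pref, List.length_ofFn] at h2 ⊢
    rw [h2]; exact hf
  · intro s
    by_cases h : ∃ f, ext s f ∈ P
    · obtain ⟨f, hf⟩ := h
      refine ⟨f, iff_of_true hf ?_⟩
      intro n
      rw [decide_eq_true_iff]
      refine ⟨fun k => ext s f (k + n), ?_⟩
      have : ∀ i (hi : i < (pref (ext s f) n).length),
          ext s f i = (pref (ext s f) n).get ⟨i, hi⟩ := by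
        intro i hi; simp [pref]
      have h2 := ext_eq_of_agree (pref (ext s f) n) (ext s f) this
      simp only [pref, List.length_ofFn] at h2 ⊢
      rw [h2]; exact hf
    · obtain ⟨a⟩ := ‹Nonempty A›
      refine ⟨fun _ => a, iff_of_false (fun hc => h ⟨_, hc⟩) ?_⟩
      intro hc
      have := hc s.length
      rw [pref_ext_len, decide_eq_true_iff] at this
      exact h this
end
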